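/- arXiv:1711.06397 — 5 statements merged into one kernel-verified Lean document; each statement's English description precedes it below -/
import Mathlib

section
/- If S' ⊆ S, then the maximum-volume minimum (S',T)-cut is a subset of the maximum-volume minimum (S,T)-cut, and its size is at most that of the latter. -/
open Finset

variable {V : Type*} [Fintype V] [DecidableEq V]

/-- The size of the cut `(S, V \ S)`: total weight of edges with exactly one
endpoint in `S` (each such edge `uv` with `u ∈ S`, `v ∉ S` counted once). -/
def cutSize (w : V → V → ℕ) (S : Finset V) : ℕ :=
  ∑ u ∈ S, ∑ v ∈ Sᶜ, w u v

/-- `X` is an `(S,T)`-cut: `S ⊆ X ⊆ V \ T`. -/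
def IsSTCut (S T X : Finset V) : Prop := S ⊆ X ∧ Disjoint X T

/-- `X` is a minimum `(S,T)`-cut. -/
def IsMinSTCut (w : V → V → ℕ) (S T X : Finset V) : Prop :=
  IsSTCut S T X ∧ ∀ Y : Finset V, IsSTCut S T Y → cutSize w X ≤ cutSize w Y

/-- `X` is the maximum-volume minimum `(S,T)`-cut: a minimum `(S,T)`-cut
containing every minimum `(S,T)`-cut. -/
def IsMaxVolMinCut (w : V → V → ℕ) (S T X : Finset V) : Prop :=
  IsMinSTCut w S T X ∧ ∀ Y : Finset V, IsMinSTCut w S T Y → Y ⊆ X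

/-- The minimum isolating cut size for terminal `t` w.r.t. terminal set `T`. -/
noncomputable def isoMu (w : V → V → ℕ) (T : Finset V) (t : V) : ℕ :=
  sInf {n | ∃ X : Finset V, t ∈ X ∧ Disjoint X (T.erase t) ∧ cutSize w X = n}

/-- The weight function obtained from `w` by deleting the edge `uv`. -/
def deleteEdge (w : V → V → ℕ) (u v : V) : V → V → ℕ :=
  fun a b => if (a = u ∧ b = v) ∨ (a = v ∧ b = u) then 0 else w a b

/-- A multiterminal cut for terminals `t 0, …, t (p-1)`, given as the function
assigning each vertex to its part: terminal `t i` must lie in part `i`. -/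
def IsMTC {p : ℕ} (t : Fin p → V) (f : V → Fin p) : Prop :=
  ∀ i, f (t i) = i

/-- The size of a multiterminal cut: total weight of crossing edges
(each unordered pair is counted twice in the double sum, hence the `/ 2`). -/
def mtcSize {p : ℕ} (w : V → V → ℕ) (f : V → Fin p) : ℚ :=
  (∑ u : V, ∑ v : V, if f u = f v then 0 else (w u v : ℚ)) / 2

/-- A minimum multiterminal cut. -/
def IsMinMTC {p : ℕ} (w : V → V → ℕ) (t : Fin p → V) (f : V → Fin p) : Prop :=
  IsMTC t f ∧ ∀ g : V → Fin p, IsMTC t g → mtcSize w f ≤ mtcSize w g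
lemma cutSize_eq (w : V → V → ℕ) (S : Finset V) :
    cutSize w S = ∑ u : V, ∑ v : V, if u ∈ S ∧ v ∉ S then w u v else 0 := by
  unfold cutSize
  rw [← Finset.sum_filter_add_sum_filter_not Finset.univ (· ∈ S)]
  have h1 : ∀ u : V, (∑ v : V, if u ∈ S ∧ v ∉ S then w u v else 0) =
      if u ∈ S then ∑ v ∈ Sᶜ, w u v else 0 := by
    intro u
    by_cases hu : u ∈ S
    · simp only [hu, if_true, true_and]
      rw [← Finset.sum_filter]
      congr 1
      ext v; simp
    · simp [hu]
  simp only [h1]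
  rw [Finset.sum_filter, Finset.sum_filter]
  simp +contextual

lemma cutSize_submodular (w : V → V → ℕ) (A B : Finset V) :
    cutSize w (A ∩ B) + cutSize w (A ∪ B) ≤ cutSize w A + cutSize w B := by
  simp only [cutSize_eq]
  rw [← Finset.sum_add_distrib, ← Finset.sum_add_distrib]
  refine Finset.sum_le_sum fun u _ => ?_
  rw [← Finset.sum_add_distrib, ← Finset.sum_add_distrib]
  refine Finset.sum_le_sum fun v _ => ?_
  by_cases h1 : u ∈ A <;> by_cases h2 : u ∈ B <;> by_cases h3 : v ∈ A <;>
    by_cases h4 : v ∈ B <;>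
    simp [Finset.mem_inter, Finset.mem_union, h1, h2, h3, h4]

/-- If S' ⊆ S then the max-vol min (S',T)-cut is contained in the max-vol min
(S,T)-cut and has size at most that of the latter. -/
theorem maxVolMinCut_mono (w : V → V → ℕ) (hsymm : ∀ u v, w u v = w v u)
    (S' S T : Finset V) (hS' : S'.Nonempty) (hsub : S' ⊆ S) (hST : Disjoint S T)
    (X' X : Finset V)
    (hX' : IsMaxVolMinCut w S' T X') (hX : IsMaxVolMinCut w S T X) :
    X' ⊆ X ∧ cutSize w X' ≤ cutSize w X := by
  have hXcut' : IsSTCut S' T X := ⟨hsub.trans hX.1.1.1, hX.1.1.2⟩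
  have hsize : cutSize w X' ≤ cutSize w X := hX'.1.2 X hXcut'
  refine ⟨?_, hsize⟩
  have hIcut : IsSTCut S' T (X' ∩ X) :=
    ⟨Finset.subset_inter hX'.1.1.1 hXcut'.1,
      Finset.disjoint_of_subset_left Finset.inter_subset_left hX'.1.1.2⟩
  have hUcut : IsSTCut S T (X' ∪ X) :=
    ⟨hX.1.1.1.trans Finset.subset_union_right,
      Finset.disjoint_union_left.mpr ⟨hX'.1.1.2, hX.1.1.2⟩⟩
  have h1 : cutSize w X' ≤ cutSize w (X' ∩ X) := hX'.1.2 _ hIcut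
  have h2 : cutSize w X ≤ cutSize w (X' ∪ X) := hX.1.2 _ hUcut
  have hsub2 := cutSize_submodular w X' X
  have hUle : cutSize w (X' ∪ X) ≤ cutSize w X := by omega
  have hUmin : IsMinSTCut w S T (X' ∪ X) :=
    ⟨hUcut, fun Y hY => hUle.trans (hX.1.2 Y hY)⟩
  have := hX.2 _ hUmin
  exact (Finset.subset_union_left).trans this
end

section
/- If v is a non-terminal vertex at distance 1 from terminal t_i (i.e., the min isolating cut size for {t_i, v} exceeds that for {t_i} by exactly 1), then there exists a minimum multiterminal cut for T in which the extension X_i(v) is entirely contained in a single part. -/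
open Finset

variable {V : Type*} [Fintype V] [DecidableEq V]

section ExtAux

set_option linter.unusedSectionVars false
set_option linter.unusedVariables false

namespace ExtAux

/-- total weight between two finsets (ordered pairs). -/
def Wt (w : V → V → ℕ) (A B : Finset V) : ℕ := ∑ u ∈ A, ∑ v ∈ B, w u v

/-- crossing weight between `A` and `B` under partition `f`. -/
def Phi {p : ℕ} (w : V → V → ℕ) (f : V → Fin p) (A B : Finset V) : ℕ :=
  ∑ u ∈ A, ∑ v ∈ B, if f u = f v then 0 else w u v

/-- same-part weight between `A` and `B` under partition `f`. -/
def Psi {p : ℕ} (w : V → V → ℕ) (f : V → Fin p) (A B : Finset V) : ℕ :=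
  ∑ u ∈ A, ∑ v ∈ B, if f u = f v then w u v else 0

/-- integral (doubled) multiterminal-cut cost. -/
def ncost {p : ℕ} (w : V → V → ℕ) (f : V → Fin p) : ℕ :=
  Phi w f univ univ

variable {p : ℕ} {w : V → V → ℕ} {f : V → Fin p}

lemma Wt_comm (hsymm : ∀ u v, w u v = w v u) (A B : Finset V) :
    Wt w A B = Wt w B A := by
  unfold Wt
  rw [Finset.sum_comm]
  exact Finset.sum_congr rfl fun u _ => Finset.sum_congr rfl fun v _ => hsymm v u

lemma Wt_union_left {A B : Finset V} (h : Disjoint A B) (C : Finset V) :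
    Wt w (A ∪ B) C = Wt w A C + Wt w B C := Finset.sum_union h

lemma Wt_union_right (A : Finset V) {B C : Finset V} (h : Disjoint B C) :
    Wt w A (B ∪ C) = Wt w A B + Wt w A C := by
  unfold Wt
  rw [← Finset.sum_add_distrib]
  exact Finset.sum_congr rfl fun u _ => Finset.sum_union h

lemma Wt_mono_right (A : Finset V) {B C : Finset V} (h : B ⊆ C) :
    Wt w A B ≤ Wt w A C :=
  Finset.sum_le_sum fun u _ => Finset.sum_le_sum_of_subset h

lemma cutSize_eq_Wt (w : V → V → ℕ) (S : Finset V) : cutSize w S = Wt w S Sᶜ := rfl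

lemma cut_submod_core (hsymm : ∀ u v, w u v = w v u)
    (P Q R S : Finset V)
    (hPQ : Disjoint P Q) (hPR : Disjoint P R) (hQR : Disjoint Q R)
    (hRS : Disjoint R S) (hQS : Disjoint Q S) (hPS : Disjoint P S)
    (A B : Finset V) (hA : A = P ∪ Q) (hB : B = P ∪ R)
    (hAc : Aᶜ = R ∪ S) (hBc : Bᶜ = Q ∪ S)
    (hABu : A ∪ B = P ∪ (Q ∪ R)) (hABuc : (A ∪ B)ᶜ = S)
    (hABi : A ∩ B = P) (hABic : (A ∩ B)ᶜ = Q ∪ (R ∪ S)) :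
    cutSize w (A ∪ B) + cutSize w (A ∩ B) ≤ cutSize w A + cutSize w B := by
  have hQRS : Disjoint Q (R ∪ S) := Finset.disjoint_union_right.2 ⟨hQR, hQS⟩
  have hPQR : Disjoint P (Q ∪ R) := Finset.disjoint_union_right.2 ⟨hPQ, hPR⟩
  have e1 : cutSize w A = Wt w P R + Wt w P S + (Wt w Q R + Wt w Q S) := by
    rw [cutSize_eq_Wt, hAc, hA, Wt_union_left hPQ, Wt_union_right _ hRS, Wt_union_right _ hRS]
  have e2 : cutSize w B = Wt w P Q + Wt w P S + (Wt w R Q + Wt w R S) := by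
    rw [cutSize_eq_Wt, hBc, hB, Wt_union_left hPR, Wt_union_right _ hQS, Wt_union_right _ hQS]
  have e3 : cutSize w (A ∪ B) = Wt w P S + (Wt w Q S + Wt w R S) := by
    rw [cutSize_eq_Wt, hABuc, hABu, Wt_union_left hPQR, Wt_union_left hQR]
  have e4 : cutSize w (A ∩ B) = Wt w P Q + (Wt w P R + Wt w P S) := by
    rw [cutSize_eq_Wt, hABic, hABi, Wt_union_right _ hQRS, Wt_union_right _ hRS]
  have hsym : Wt w Q R = Wt w R Q := Wt_comm hsymm Q R
  omega

lemma cut_submod (hsymm : ∀ u v, w u v = w v u) (A B : Finset V) :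
    cutSize w (A ∪ B) + cutSize w (A ∩ B) ≤ cutSize w A + cutSize w B := by
  classical
  refine cut_submod_core hsymm (A ∩ B) (A \ B) (B \ A) ((A ∪ B)ᶜ) ?_ ?_ ?_ ?_ ?_ ?_ A B ?_ ?_ ?_ ?_ ?_ ?_ ?_ ?_ <;>
    first
      | (rw [Finset.disjoint_left]; intro x hx hx';
         simp only [Finset.mem_inter, Finset.mem_sdiff, Finset.mem_compl,
           Finset.mem_union] at hx hx'; try tauto)
      | (ext x;
         simp only [Finset.mem_inter, Finset.mem_sdiff, Finset.mem_compl,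
           Finset.mem_union]; try tauto)

lemma Phi_add_Psi (A B : Finset V) : Phi w f A B + Psi w f A B = Wt w A B := by
  unfold Phi Psi Wt
  rw [← Finset.sum_add_distrib]
  refine Finset.sum_congr rfl fun u _ => ?_
  rw [← Finset.sum_add_distrib]
  refine Finset.sum_congr rfl fun v _ => ?_
  by_cases h : f u = f v <;> simp [h]

lemma Phi_comm (hsymm : ∀ u v, w u v = w v u) (A B : Finset V) :
    Phi w f A B = Phi w f B A := by
  unfold Phi
  rw [Finset.sum_comm]
  refine Finset.sum_congr rfl fun u _ => Finset.sum_congr rfl fun v _ => ?_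
  by_cases h : f u = f v
  · rw [if_pos h, if_pos h.symm]
  · rw [if_neg h, if_neg (fun h' => h h'.symm), hsymm]

lemma Psi_le_Wt (A B : Finset V) : Psi w f A B ≤ Wt w A B := by
  have := Phi_add_Psi (w := w) (f := f) A B; omega

lemma Phi_union_left {A B : Finset V} (h : Disjoint A B) (C : Finset V) :
    Phi w f (A ∪ B) C = Phi w f A C + Phi w f B C := Finset.sum_union h

lemma Phi_union_right (A : Finset V) {B C : Finset V} (h : Disjoint B C) :
    Phi w f A (B ∪ C) = Phi w f A B + Phi w f A C := by
  unfold Phi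
  rw [← Finset.sum_add_distrib]
  exact Finset.sum_congr rfl fun u _ => Finset.sum_union h

/-- key reduction: moving a whole block `D` into part `i` does not increase the
cost, provided the combinatorial inequality `hG'` holds. -/
lemma move_le (hsymm : ∀ u v, w u v = w v u) (i : Fin p) (D : Finset V)
    (hG' : 2 * Psi w f (D.filter (fun x => ¬ f x = i)) (Dᶜ.filter (fun x => ¬ f x = i))
         ≤ 2 * Wt w (D.filter (fun x => f x = i)) (D.filter (fun x => ¬ f x = i))
           + Phi w f (D.filter (fun x => ¬ f x = i)) (D.filter (fun x => ¬ f x = i))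
           + 2 * Wt w (D.filter (fun x => ¬ f x = i)) (Dᶜ.filter (fun x => f x = i))) :
    ncost w (fun x => if x ∈ D then i else f x) ≤ ncost w f := by
  set g : V → Fin p := fun x => if x ∈ D then i else f x with hg
  set Di := D.filter (fun x => f x = i) with hDi
  set X' := D.filter (fun x => ¬ f x = i) with hX'
  set Oi := Dᶜ.filter (fun x => f x = i) with hOi
  set O' := Dᶜ.filter (fun x => ¬ f x = i) with hO'
  have split : ∀ h : V → Fin p,
      ncost w h = Phi w h D D + Phi w h D Dᶜ + (Phi w h Dᶜ D + Phi w h Dᶜ Dᶜ) := by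
    intro h
    unfold ncost Phi
    rw [← Finset.sum_add_sum_compl D (fun u => ∑ v : V, if h u = h v then 0 else w u v)]
    congr 1
    · rw [← Finset.sum_add_distrib]
      exact Finset.sum_congr rfl fun u _ =>
        (Finset.sum_add_sum_compl D (fun v => if h u = h v then 0 else w u v)).symm
    · rw [← Finset.sum_add_distrib]
      exact Finset.sum_congr rfl fun u _ =>
        (Finset.sum_add_sum_compl D (fun v => if h u = h v then 0 else w u v)).symm
  have hgOO : Phi w g Dᶜ Dᶜ = Phi w f Dᶜ Dᶜ := by
    refine Finset.sum_congr rfl fun u hu => Finset.sum_congr rfl fun v hv => ?_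
    rw [Finset.mem_compl] at hu hv
    simp [hg, hu, hv]
  have hgDD : Phi w g D D = 0 := by
    refine Finset.sum_eq_zero fun u hu => Finset.sum_eq_zero fun v hv => ?_
    simp [hg, hu, hv]
  have hgDO : Phi w g D Dᶜ = Wt w D O' := by
    refine Finset.sum_congr rfl fun u hu => ?_
    have : ∀ v ∈ Dᶜ, (if g u = g v then 0 else w u v)
        = (if ¬ f v = i then w u v else 0) := by
      intro v hv
      rw [Finset.mem_compl] at hv
      have hgu : g u = i := by simp [hg, hu]
      have hgv : g v = f v := by simp [hg, hv]
      rw [hgu, hgv]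
      by_cases h : f v = i
      · rw [if_pos h.symm, if_neg (by simp [h])]
      · rw [if_neg (fun hh => h hh.symm), if_pos h]
    rw [Finset.sum_congr rfl this, ← Finset.sum_filter]
  have hgOD : Phi w g Dᶜ D = Wt w D O' := by
    rw [Phi_comm hsymm, hgDO]
  have hPhicomm : Phi w f Dᶜ D = Phi w f D Dᶜ := Phi_comm hsymm _ _
  rw [split g, split f, hgOO, hgDD, hgDO, hgOD, hPhicomm]
  have hDsplit : D = Di ∪ X' := by
    rw [hDi, hX']; ext x; simp; tauto
  have hDdisj : Disjoint Di X' := by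
    rw [hDi, hX', Finset.disjoint_left]; intro x hx hx'
    simp only [Finset.mem_filter] at hx hx'; tauto
  have hOsplit : Dᶜ = Oi ∪ O' := by
    rw [hOi, hO']; ext x; simp; tauto
  have hOdisj : Disjoint Oi O' := by
    rw [hOi, hO', Finset.disjoint_left]; intro x hx hx'
    simp only [Finset.mem_filter] at hx hx'; tauto
  have eDO : Phi w f D Dᶜ = Wt w X' Oi + (Wt w Di O' + Phi w f X' O') := by
    rw [hOsplit]
    rw [Phi_union_right _ hOdisj]
    congr 1
    · rw [hDsplit, Phi_union_left hDdisj]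
      have h1 : Phi w f Di Oi = 0 := by
        refine Finset.sum_eq_zero fun u hu => Finset.sum_eq_zero fun v hv => ?_
        rw [hDi, Finset.mem_filter] at hu
        rw [hOi, Finset.mem_filter] at hv
        rw [hu.2, hv.2, if_pos rfl]
      have h2 : Phi w f X' Oi = Wt w X' Oi := by
        refine Finset.sum_congr rfl fun u hu => Finset.sum_congr rfl fun v hv => ?_
        rw [hX', Finset.mem_filter] at hu
        rw [hOi, Finset.mem_filter] at hv
        rw [if_neg (by rw [hv.2]; exact hu.2)]
      rw [h1, h2, Nat.zero_add]
    · rw [hDsplit, Phi_union_left hDdisj]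
      congr 1
      refine Finset.sum_congr rfl fun u hu => Finset.sum_congr rfl fun v hv => ?_
      rw [hDi, Finset.mem_filter] at hu
      rw [hO', Finset.mem_filter] at hv
      rw [if_neg (by rw [hu.2]; intro h; exact hv.2 h.symm)]
  have eDD : Phi w f D D = Wt w Di X' + Wt w X' Di + Phi w f X' X' := by
    rw [hDsplit, Phi_union_left hDdisj, Phi_union_right _ hDdisj, Phi_union_right _ hDdisj]
    have h1 : Phi w f Di Di = 0 := by
      refine Finset.sum_eq_zero fun u hu => Finset.sum_eq_zero fun v hv => ?_
      rw [hDi, Finset.mem_filter] at hu hv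
      rw [hu.2, hv.2, if_pos rfl]
    have h2 : Phi w f Di X' = Wt w Di X' := by
      refine Finset.sum_congr rfl fun u hu => Finset.sum_congr rfl fun v hv => ?_
      rw [hDi, Finset.mem_filter] at hu
      rw [hX', Finset.mem_filter] at hv
      rw [if_neg (by rw [hu.2]; intro h; exact hv.2 h.symm)]
    have h3 : Phi w f X' Di = Wt w X' Di := by
      refine Finset.sum_congr rfl fun u hu => Finset.sum_congr rfl fun v hv => ?_
      rw [hX', Finset.mem_filter] at hu
      rw [hDi, Finset.mem_filter] at hv
      rw [if_neg (by rw [hv.2]; exact hu.2)]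
    rw [h1, h2, h3]; omega
  have eWDO : Wt w D O' = Wt w Di O' + (Phi w f X' O' + Psi w f X' O') := by
    rw [hDsplit, Wt_union_left hDdisj, Phi_add_Psi]
  have hXD : Wt w X' Di = Wt w Di X' := Wt_comm hsymm _ _
  rw [eDO, eDD, eWDO]
  omega

lemma mtcSize_eq_ncost (f : V → Fin p) : mtcSize w f = (ncost w f : ℚ) / 2 := by
  unfold mtcSize ncost Phi
  congr 1
  push_cast
  refine Finset.sum_congr rfl fun u _ => Finset.sum_congr rfl fun v _ => ?_
  by_cases h : f u = f v <;> simp [h]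

lemma mtcSize_le_of_ncost_le {f g : V → Fin p} (h : ncost w f ≤ ncost w g) :
    mtcSize w f ≤ mtcSize w g := by
  rw [mtcSize_eq_ncost, mtcSize_eq_ncost]
  have : (ncost w f : ℚ) ≤ (ncost w g : ℚ) := by exact_mod_cast h
  linarith

lemma even_sum_sym (k : V → V → ℕ) (hk : ∀ u v, k u v = k v u) (hd : ∀ u, k u u = 0)
    (s : Finset V) : Even (∑ u ∈ s, ∑ v ∈ s, k u v) := by
  classical
  induction s using Finset.induction_on with
  | empty => simp
  | @insert a s ha ih =>
    rw [Finset.sum_insert ha]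
    rw [Finset.sum_insert ha]
    have h1 : ∀ u ∈ s, ∑ v ∈ insert a s, k u v = k u a + ∑ v ∈ s, k u v := by
      intro u hu; rw [Finset.sum_insert ha]
    rw [Finset.sum_congr rfl h1, Finset.sum_add_distrib, hd a]
    have h2 : ∑ u ∈ s, k u a = ∑ v ∈ s, k a v :=
      Finset.sum_congr rfl fun u _ => hk u a
    rw [h2]
    obtain ⟨m, hm⟩ := ih
    exact ⟨∑ v ∈ s, k a v + m, by omega⟩

/-- existence of a minimum multiterminal cut -/
lemma exists_minMTC (t : Fin p → V) (ht : Function.Injective t) (hp : 0 < p) :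
    ∃ f : V → Fin p, IsMinMTC w t f := by
  classical
  have hne : ∃ f : V → Fin p, IsMTC t f := by
    refine ⟨fun x => if h : ∃ j, t j = x then h.choose else ⟨0, hp⟩, fun i => ?_⟩
    have h : ∃ j, t j = t i := ⟨i, rfl⟩
    simp only [dif_pos h]
    exact ht h.choose_spec
  obtain ⟨f0, hf0⟩ := hne
  have hs : ((univ : Finset (V → Fin p)).filter (fun f => IsMTC t f)).Nonempty :=
    ⟨f0, by simp [hf0]⟩
  obtain ⟨f, hf, hmin⟩ := Finset.exists_min_image _ (fun f => mtcSize w f) hs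
  rw [Finset.mem_filter] at hf
  exact ⟨f, hf.2, fun g hg => hmin g (by simp [hg])⟩

end ExtAux

end ExtAux

section MainTheorem

open ExtAux

set_option maxHeartbeats 1000000

/-- If v is a non-terminal vertex at distance 1 from terminal t i, then some
minimum multiterminal cut keeps the extension X_i(v) = C' \ C in one part. -/
theorem extension_in_one_part {p : ℕ} (hp : 2 ≤ p)
    (w : V → V → ℕ) (hsymm : ∀ u v, w u v = w v u)
    (t : Fin p → V) (ht : Function.Injective t)
    (v : V) (hv : v ∉ Set.range t) (i : Fin p) (C C' : Finset V)
    (hC : IsMaxVolMinCut w {t i} ((Finset.univ.image t).erase (t i)) C)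
    (hC' : IsMaxVolMinCut w {t i, v} ((Finset.univ.image t).erase (t i)) C')
    (hext : cutSize w C' = cutSize w C + 1) :
    ∃ f : V → Fin p, IsMinMTC w t f ∧ ∃ j : Fin p, ∀ x ∈ C' \ C, f x = j := by
  classical
  obtain ⟨⟨⟨hCsub, hCdisj⟩, hCmin⟩, hCmax⟩ := hC
  obtain ⟨⟨⟨hC'sub, hC'disj⟩, hC'min⟩, hC'max⟩ := hC'
  set T' := (Finset.univ.image t).erase (t i) with hT'
  have htiC : t i ∈ C := hCsub (Finset.mem_singleton_self _)
  have htiC' : t i ∈ C' := hC'sub (by simp)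
  have hvC' : v ∈ C' := hC'sub (by simp)
  -- Step 0 : C ⊆ C'
  have hCC' : C ⊆ C' := by
    have h1 : cutSize w C ≤ cutSize w (C ∩ C') :=
      hCmin _ ⟨Finset.singleton_subset_iff.2 (Finset.mem_inter.2 ⟨htiC, htiC'⟩),
        hCdisj.mono_left Finset.inter_subset_left⟩
    have hsub2 : IsSTCut {t i, v} T' (C ∪ C') :=
      ⟨hC'sub.trans Finset.subset_union_right,
        Finset.disjoint_union_left.2 ⟨hCdisj, hC'disj⟩⟩
    have h2 := ExtAux.cut_submod hsymm C C'
    have h3 : cutSize w (C ∪ C') ≤ cutSize w C' := by omega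
    have hmin : IsMinSTCut w {t i, v} T' (C ∪ C') :=
      ⟨hsub2, fun Y hY => h3.trans (hC'min Y hY)⟩
    exact Finset.subset_union_left.trans (hC'max _ hmin)
  set X := C' \ C with hXdef
  set Oc := C'ᶜ with hOcdef
  have hXC' : X ⊆ C' := by rw [hXdef]; exact Finset.sdiff_subset
  have hCXdisj : Disjoint C X := by rw [hXdef]; exact Finset.disjoint_sdiff
  have hC'split : C ∪ X = C' := by
    rw [hXdef]; ext x
    simp only [Finset.mem_union, Finset.mem_sdiff]
    constructor
    · rintro (h | h); exacts [hCC' h, h.1]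
    · intro h; by_cases hc : x ∈ C; exacts [Or.inl hc, Or.inr ⟨h, hc⟩]
  have hXOc : Disjoint X Oc := by
    rw [hOcdef]; exact (disjoint_compl_right).mono_left hXC'
  have hCOc : Disjoint C Oc := by
    rw [hOcdef]; exact (disjoint_compl_right).mono_left hCC'
  have hCcomp : Cᶜ = X ∪ Oc := by
    rw [hXdef, hOcdef]; ext x
    simp only [Finset.mem_compl, Finset.mem_union, Finset.mem_sdiff]
    constructor
    · intro h; by_cases h2 : x ∈ C'; exacts [Or.inl ⟨h2, h⟩, Or.inr h2]
    · rintro (⟨_, h⟩ | h2); · exact h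
      · intro hx; exact h2 (hCC' hx)
  -- F1
  have hF1 : Wt w X Oc = Wt w C X + 1 := by
    have e1 : cutSize w C' = Wt w C Oc + Wt w X Oc := by
      rw [cutSize_eq_Wt, ← hOcdef, ← hC'split, Wt_union_left hCXdisj]
    have e2 : cutSize w C = Wt w C X + Wt w C Oc := by
      rw [cutSize_eq_Wt, hCcomp, Wt_union_right _ hXOc]
    omega
  -- F2
  have hF2 : ∀ Z : Finset V, Z ⊆ X → Z.Nonempty →
      Wt w C Z + 1 ≤ Wt w Z (X \ Z) + Wt w Z Oc := by
    intro Z hZX hZne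
    have hZC' : Z ⊆ C' := hZX.trans hXC'
    have hCZdisj : Disjoint C Z := hCXdisj.mono_right hZX
    have hcut : IsSTCut {t i} T' (C ∪ Z) :=
      ⟨Finset.singleton_subset_iff.2 (Finset.mem_union_left _ htiC),
        Finset.disjoint_union_left.2 ⟨hCdisj, hC'disj.mono_left hZC'⟩⟩
    have hge : cutSize w C ≤ cutSize w (C ∪ Z) := hCmin _ hcut
    have hne : cutSize w C ≠ cutSize w (C ∪ Z) := by
      intro heq
      have hmin : IsMinSTCut w {t i} T' (C ∪ Z) :=
        ⟨hcut, fun Y hY => heq ▸ hCmin Y hY⟩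
      obtain ⟨z, hz⟩ := hZne
      have : z ∈ C := hCmax _ hmin (Finset.mem_union_right _ hz)
      exact Finset.disjoint_left.1 hCZdisj this hz
    have hZXZ : Disjoint Z (X \ Z) := Finset.disjoint_sdiff
    have hZOc : Disjoint Z Oc := hXOc.mono_left hZX
    have hXZOc : Disjoint (X \ Z) Oc := hXOc.mono_left Finset.sdiff_subset
    have hCuZc : (C ∪ Z)ᶜ = (X \ Z) ∪ Oc := by
      ext x
      simp only [Finset.mem_compl, Finset.mem_union, Finset.mem_sdiff]
      constructor
      · intro h
        push_neg at h
        by_cases h2 : x ∈ C'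
        · have hx : x ∈ X := by rw [hXdef]; exact Finset.mem_sdiff.2 ⟨h2, h.1⟩
          exact Or.inl ⟨hx, h.2⟩
        · exact Or.inr (by rw [hOcdef]; exact Finset.mem_compl.2 h2)
      · rintro (⟨hx, hz⟩ | h2)
        · push_neg
          exact ⟨fun hc => Finset.disjoint_left.1 hCXdisj hc hx, hz⟩
        · push_neg
          have hx : x ∉ C' := by rw [hOcdef] at h2; exact Finset.mem_compl.1 h2
          exact ⟨fun hc => hx (hCC' hc), fun hz => hx (hZC' hz)⟩
    have e1 : cutSize w (C ∪ Z)
        = (Wt w C (X \ Z) + Wt w C Oc) + (Wt w Z (X \ Z) + Wt w Z Oc) := by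
      rw [cutSize_eq_Wt, hCuZc, Wt_union_left hCZdisj, Wt_union_right _ hXZOc,
        Wt_union_right _ hXZOc]
    have hCcomp2 : Cᶜ = Z ∪ ((X \ Z) ∪ Oc) := by
      rw [hCcomp]
      have : Z ∪ (X \ Z) = X := Finset.union_sdiff_of_subset hZX
      rw [← Finset.union_assoc, this]
    have e2 : cutSize w C = Wt w C Z + (Wt w C (X \ Z) + Wt w C Oc) := by
      rw [cutSize_eq_Wt, hCcomp2,
        Wt_union_right _ (Finset.disjoint_union_right.2 ⟨hZXZ, hZOc⟩),
        Wt_union_right _ hXZOc]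
    omega
  -- terminals outside C, C'
  have htk : ∀ k, k ≠ i → t k ∈ T' := fun k hk =>
    Finset.mem_erase.2 ⟨fun h => hk (ht h), Finset.mem_image_of_mem t (Finset.mem_univ k)⟩
  have htkC : ∀ k, k ≠ i → t k ∉ C := fun k hk h =>
    Finset.disjoint_left.1 hCdisj h (htk k hk)
  have htkC' : ∀ k, k ≠ i → t k ∉ C' := fun k hk h =>
    Finset.disjoint_left.1 hC'disj h (htk k hk)
  -- a minimum multiterminal cut exists
  obtain ⟨f0, hf0⟩ := ExtAux.exists_minMTC (w := w) t ht (by omega)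
  -- Step 1: move C into part i
  set f1 : V → Fin p := fun x => if x ∈ C then i else f0 x with hf1def
  have hstep1 : ncost w f1 ≤ ncost w f0 := by
    apply ExtAux.move_le hsymm i C
    set Ci := C.filter (fun x => f0 x = i) with hCi
    set Xc := C.filter (fun x => ¬ f0 x = i) with hXc
    set OiC := Cᶜ.filter (fun x => f0 x = i) with hOiC
    set O'C := Cᶜ.filter (fun x => ¬ f0 x = i) with hO'C
    have hCiX : Disjoint Ci Xc := by
      rw [hCi, hXc, Finset.disjoint_left]; intro x hx hx'
      simp only [Finset.mem_filter] at hx hx'; exact hx'.2 hx.2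
    have hunion : Ci ∪ Xc = C := by
      rw [hCi, hXc]; exact Finset.filter_union_filter_not_eq _ C
    have hcut : IsSTCut {t i} T' Ci :=
      ⟨Finset.singleton_subset_iff.2 (by rw [hCi]; exact Finset.mem_filter.2 ⟨htiC, hf0.1 i⟩),
        hCdisj.mono_left (by rw [hCi]; exact Finset.filter_subset _ _)⟩
    have hge : cutSize w C ≤ cutSize w Ci := hCmin _ hcut
    have hXcC : Disjoint Xc Cᶜ := by
      rw [hXc]; exact (disjoint_compl_right).mono_left (Finset.filter_subset _ _)
    have hCic : Ciᶜ = Xc ∪ Cᶜ := by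
      rw [hCi, hXc]; ext x
      simp only [Finset.mem_compl, Finset.mem_union, Finset.mem_filter]
      by_cases hx : x ∈ C <;> by_cases hfx : f0 x = i <;> simp [hx, hfx]
    have e1 : cutSize w Ci = Wt w Ci Xc + Wt w Ci Cᶜ := by
      rw [cutSize_eq_Wt, hCic, Wt_union_right _ hXcC]
    have e2 : cutSize w C = Wt w Ci Cᶜ + Wt w Xc Cᶜ := by
      rw [cutSize_eq_Wt, ← hunion, Wt_union_left hCiX]
    have hOun : OiC ∪ O'C = Cᶜ := by
      rw [hOiC, hO'C]; exact Finset.filter_union_filter_not_eq _ _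
    have hOdisj : Disjoint OiC O'C := by
      rw [hOiC, hO'C, Finset.disjoint_left]; intro x hx hx'
      simp only [Finset.mem_filter] at hx hx'; exact hx'.2 hx.2
    have e3 : Wt w Xc Cᶜ = Wt w Xc OiC + Wt w Xc O'C := by
      rw [← hOun, Wt_union_right _ hOdisj]
    have e4 : Psi w f0 Xc O'C ≤ Wt w Xc O'C := Psi_le_Wt _ _
    omega
  have hf1MTC : IsMTC t f1 := by
    intro k
    by_cases hk : k = i
    · subst hk; rw [hf1def]; simp [htiC]
    · rw [hf1def]; simp [htkC k hk, hf0.1 k]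
  have hf1min : IsMinMTC w t f1 :=
    ⟨hf1MTC, fun g hg => (mtcSize_le_of_ncost_le hstep1).trans (hf0.2 g hg)⟩
  have hf1C : ∀ x ∈ C, f1 x = i := by
    intro x hx; rw [hf1def]; simp [hx]
  -- case split
  by_cases hone : ∃ j, ∀ x ∈ X, f1 x = j
  · obtain ⟨j, hj⟩ := hone
    exact ⟨f1, hf1min, j, fun x hx => hj x hx⟩
  · -- we move all of C' into part i
    set Z := X.filter (fun x => f1 x = i) with hZdef
    set X' := X.filter (fun x => ¬ f1 x = i) with hX'def
    have hZX : Z ⊆ X := by rw [hZdef]; exact Finset.filter_subset _ _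
    have hX'X : X' ⊆ X := by rw [hX'def]; exact Finset.filter_subset _ _
    have hZX' : Z ∪ X' = X := by
      rw [hZdef, hX'def]; exact Finset.filter_union_filter_not_eq _ _
    have hZX'disj : Disjoint Z X' := by
      rw [hZdef, hX'def, Finset.disjoint_left]; intro x hx hx'
      simp only [Finset.mem_filter] at hx hx'; exact hx'.2 hx.2
    have hD2 : C'.filter (fun x => ¬ f1 x = i) = X' := by
      rw [hX'def]; ext x
      simp only [Finset.mem_filter, hXdef, Finset.mem_sdiff]
      constructor
      · rintro ⟨h1, h2⟩
        refine ⟨⟨h1, fun hc => h2 (hf1C x hc)⟩, h2⟩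
      · rintro ⟨⟨h1, _⟩, h2⟩; exact ⟨h1, h2⟩
    have hD1 : C'.filter (fun x => f1 x = i) = C ∪ Z := by
      rw [hZdef]; ext x
      simp only [Finset.mem_filter, Finset.mem_union, hXdef, Finset.mem_sdiff]
      constructor
      · rintro ⟨h1, h2⟩
        by_cases hc : x ∈ C
        · exact Or.inl hc
        · exact Or.inr ⟨⟨h1, hc⟩, h2⟩
      · rintro (hc | ⟨⟨h1, _⟩, h2⟩)
        · exact ⟨hCC' hc, hf1C x hc⟩
        · exact ⟨h1, h2⟩
    have hOun : C'ᶜ.filter (fun x => f1 x = i) ∪ C'ᶜ.filter (fun x => ¬ f1 x = i) = Oc := by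
      rw [hOcdef]; exact Finset.filter_union_filter_not_eq _ _
    have hOdisj : Disjoint (C'ᶜ.filter (fun x => f1 x = i)) (C'ᶜ.filter (fun x => ¬ f1 x = i)) := by
      rw [Finset.disjoint_left]; intro x hx hx'
      simp only [Finset.mem_filter] at hx hx'; exact hx'.2 hx.2
    set Oi := C'ᶜ.filter (fun x => f1 x = i) with hOidef
    set O' := C'ᶜ.filter (fun x => ¬ f1 x = i) with hO'def
    have hstep2 : ncost w (fun x => if x ∈ C' then i else f1 x) ≤ ncost w f1 := by
      apply ExtAux.move_le hsymm i C'
      rw [hD1, hD2, ← hOidef, ← hO'def]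
      by_cases hZne : Z.Nonempty
      · -- Case A
        have hXZ : X \ Z = X' := by
          rw [hZdef, hX'def]; ext x
          simp only [Finset.mem_sdiff, Finset.mem_filter]
          constructor
          · rintro ⟨h1, h2⟩; exact ⟨h1, fun hf => h2 ⟨h1, hf⟩⟩
          · rintro ⟨h1, h2⟩; exact ⟨h1, fun hh => h2 hh.2⟩
        have hf2 := hF2 Z hZX hZne
        rw [hXZ] at hf2
        have eXOc : Wt w X Oc = Wt w Z Oc + Wt w X' Oc := by
          rw [← hZX', Wt_union_left hZX'disj]
        have eCX : Wt w C X = Wt w C Z + Wt w C X' := by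
          rw [← hZX', Wt_union_right _ hZX'disj]
        have eCZX' : Wt w (C ∪ Z) X' = Wt w C X' + Wt w Z X' := by
          rw [Wt_union_left (hCXdisj.mono_right hZX)]
        have eX'Oc : Wt w X' Oc = Wt w X' Oi + Wt w X' O' := by
          rw [← hOun, Wt_union_right _ hOdisj]
        have ePsi : Psi w f1 X' O' ≤ Wt w X' O' := Psi_le_Wt _ _
        omega
      · -- Case C : Z = ∅
        have hZe : Z = ∅ := Finset.not_nonempty_iff_eq_empty.1 hZne
        have hX'eq : X' = X := by
          rw [hX'def]; apply Finset.filter_true_of_mem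
          intro x hx hfx
          have : x ∈ Z := by rw [hZdef]; exact Finset.mem_filter.2 ⟨hx, hfx⟩
          rw [hZe] at this; exact absurd this (Finset.notMem_empty x)
        have hCZ : C ∪ Z = C := by rw [hZe, Finset.union_empty]
        rw [hX'eq, hCZ]
        -- ∑ over parts of the per-part inequality
        have hjineq : ∀ j : Fin p,
            Wt w C (X.filter (fun x => f1 x = j))
              + (if (X.filter (fun x => f1 x = j)).Nonempty then 1 else 0)
            ≤ Wt w (X.filter (fun x => f1 x = j)) (X \ X.filter (fun x => f1 x = j))
              + Wt w (X.filter (fun x => f1 x = j)) Oc := by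
          intro j
          by_cases hne : (X.filter (fun x => f1 x = j)).Nonempty
          · rw [if_pos hne]
            exact hF2 _ (Finset.filter_subset _ _) hne
          · rw [Finset.not_nonempty_iff_eq_empty.1 hne]
            simp [Wt]
        have hsum := Finset.sum_le_sum (fun j (_ : j ∈ (univ : Finset (Fin p))) => hjineq j)
        rw [Finset.sum_add_distrib, Finset.sum_add_distrib] at hsum
        -- identities
        have iA : ∑ j : Fin p, Wt w C (X.filter (fun x => f1 x = j)) = Wt w C X := by
          have hswap : ∀ B : Finset V, Wt w C B = ∑ v ∈ B, ∑ u ∈ C, w u v := by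
            intro B; exact Finset.sum_comm
          simp only [hswap]
          exact Finset.sum_fiberwise X (fun x => f1 x) (fun v => ∑ u ∈ C, w u v)
        have iB : ∑ j : Fin p, Wt w (X.filter (fun x => f1 x = j)) Oc = Wt w X Oc :=
          Finset.sum_fiberwise X (fun x => f1 x) (fun u => ∑ v ∈ Oc, w u v)
        have iC : ∑ j : Fin p, Wt w (X.filter (fun x => f1 x = j))
            (X \ X.filter (fun x => f1 x = j)) = Phi w f1 X X := by
          have hper : ∀ j : Fin p, Wt w (X.filter (fun x => f1 x = j))
              (X \ X.filter (fun x => f1 x = j))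
              = ∑ u ∈ X.filter (fun x => f1 x = j), ∑ v ∈ X,
                  if f1 u = f1 v then 0 else w u v := by
            intro j
            refine Finset.sum_congr rfl fun u hu => ?_
            rw [Finset.mem_filter] at hu
            have hXd : X \ X.filter (fun x => f1 x = j) = X.filter (fun x => ¬ f1 x = j) := by
              ext x
              simp only [Finset.mem_sdiff, Finset.mem_filter]
              constructor
              · rintro ⟨h1, h2⟩; exact ⟨h1, fun hf => h2 ⟨h1, hf⟩⟩
              · rintro ⟨h1, h2⟩; exact ⟨h1, fun hh => h2 hh.2⟩
            rw [hXd, Finset.sum_filter]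
            refine Finset.sum_congr rfl fun x hx => ?_
            by_cases hfx : f1 x = j
            · rw [if_neg (by rw [hfx]; simp), if_pos (by rw [hu.2, hfx])]
            · rw [if_pos hfx, if_neg (by rw [hu.2]; exact fun hh => hfx hh.symm)]
          rw [Finset.sum_congr rfl (fun j _ => hper j)]
          exact Finset.sum_fiberwise X (fun x => f1 x)
            (fun u => ∑ v ∈ X, if f1 u = f1 v then 0 else w u v)
        have iD : ∑ j : Fin p, (if (X.filter (fun x => f1 x = j)).Nonempty then 1 else 0)
            = ((univ : Finset (Fin p)).filter
                (fun j => (X.filter (fun x => f1 x = j)).Nonempty)).card := by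
          rw [Finset.card_filter]
        -- m ≥ 2
        have hXne : X.Nonempty := by
          rcases Finset.eq_empty_or_nonempty X with h | h
          · exact absurd ⟨i, fun x hx => by rw [h] at hx; exact absurd hx (Finset.notMem_empty x)⟩ hone
          · exact h
        obtain ⟨u1, hu1⟩ := hXne
        have : ¬ ∀ x ∈ X, f1 x = f1 u1 := fun h => hone ⟨f1 u1, h⟩
        push_neg at this
        obtain ⟨u2, hu2, hu2ne⟩ := this
        have hm2 : 2 ≤ ((univ : Finset (Fin p)).filter
            (fun j => (X.filter (fun x => f1 x = j)).Nonempty)).card := by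
          have hsub : ({f1 u1, f1 u2} : Finset (Fin p)) ⊆
              (univ : Finset (Fin p)).filter
                (fun j => (X.filter (fun x => f1 x = j)).Nonempty) := by
            intro j hj
            rw [Finset.mem_insert, Finset.mem_singleton] at hj
            rcases hj with h | h
            · subst h
              exact Finset.mem_filter.2 ⟨Finset.mem_univ _,
                ⟨u1, Finset.mem_filter.2 ⟨hu1, rfl⟩⟩⟩
            · subst h
              exact Finset.mem_filter.2 ⟨Finset.mem_univ _,
                ⟨u2, Finset.mem_filter.2 ⟨hu2, rfl⟩⟩⟩
          calc 2 = ({f1 u1, f1 u2} : Finset (Fin p)).card :=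
                (Finset.card_pair (fun h => hu2ne h.symm)).symm
            _ ≤ _ := Finset.card_le_card hsub
        -- evenness
        have heven : Even (Phi w f1 X X) := by
          apply ExtAux.even_sum_sym
          · intro u v
            by_cases h : f1 u = f1 v
            · rw [if_pos h, if_pos h.symm]
            · rw [if_neg h, if_neg (fun h' => h h'.symm), hsymm]
          · intro u; rw [if_pos rfl]
        rw [iA, iB, iC, iD] at hsum
        obtain ⟨c, hc⟩ := heven
        have hPhi2 : 2 ≤ Phi w f1 X X := by omega
        have eXOc2 : Wt w X Oc = Wt w X Oi + Wt w X O' := by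
          rw [← hOun, Wt_union_right _ hOdisj]
        have ePsi : Psi w f1 X O' ≤ Wt w X O' := Psi_le_Wt _ _
        omega
    -- finish
    set g : V → Fin p := fun x => if x ∈ C' then i else f1 x with hgdef
    have hgMTC : IsMTC t g := by
      intro k
      by_cases hk : k = i
      · subst hk; rw [hgdef]; simp [htiC']
      · rw [hgdef]; simp only [htkC' k hk, if_neg]
        exact hf1MTC k
    have hgmin : IsMinMTC w t g :=
      ⟨hgMTC, fun g' hg' => (mtcSize_le_of_ncost_le hstep2).trans (hf1min.2 g' hg')⟩
    refine ⟨g, hgmin, i, fun x hx => ?_⟩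
    rw [hgdef]
    have : x ∈ C' := hXC' hx
    simp [this]

end MainTheorem
end

section
/- If a non-terminal vertex v has exactly two neighbors u and u' with w(v,u) ≥ w(v,u'), then there exists a minimum multiterminal cut for T that places v in the same part as u. -/
open Finset

variable {V : Type*} [Fintype V] [DecidableEq V]

/-- If a non-terminal vertex v has exactly two neighbors u, u' with
w(v,u) ≥ w(v,u'), then some minimum multiterminal cut places v with u. -/
theorem degree_two_merge {p : ℕ} (hp : 2 ≤ p)
    (w : V → V → ℕ) (hsymm : ∀ a b, w a b = w b a) (hloop : ∀ a, w a a = 0)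
    (t : Fin p → V) (ht : Function.Injective t)
    (v u u' : V) (hv : v ∉ Set.range t) (huu' : u ≠ u')
    (hnbhd : Finset.univ.filter (fun x => 0 < w v x) = {u, u'})
    (hwt : w v u' ≤ w v u) :
    ∃ f : V → Fin p, IsMinMTC w t f ∧ f v = f u := by
    classical
  -- basic facts about v's neighborhood
  have hzero : ∀ x, x ≠ u → x ≠ u' → w v x = 0 := by
    intro x hx hx'
    by_contra h
    have hmem : x ∈ Finset.univ.filter (fun x => 0 < w v x) := by
      simp [Nat.pos_of_ne_zero h]
    rw [hnbhd] at hmem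
    simp [hx, hx'] at hmem
  have huv : u ≠ v := by
    intro h
    have hmem : u ∈ ({u, u'} : Finset V) := by simp
    rw [← hnbhd] at hmem
    simp [h, hloop] at hmem
  have hu'v : u' ≠ v := by
    intro h
    have hmem : u' ∈ ({u, u'} : Finset V) := by simp
    rw [← hnbhd] at hmem
    simp [h, hloop] at hmem
  -- natural-number cut size
  set N : (V → Fin p) → ℕ :=
    fun f => ∑ a : V, ∑ b : V, if f a = f b then 0 else w a b with hN
  have hsize : ∀ f : V → Fin p, mtcSize w f = (N f : ℚ) / 2 := by
    intro f
    simp [mtcSize, hN, Nat.cast_sum, apply_ite (Nat.cast : ℕ → ℚ)]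
  -- decomposition of N
  have key : ∀ f : V → Fin p, N f =
      (∑ a ∈ Finset.univ.erase v, ∑ b ∈ Finset.univ.erase v,
        if f a = f b then 0 else w a b)
      + 2 * (∑ b : V, if f v = f b then 0 else w v b) := by
    intro f
    have tsymm : ∀ a, (if f a = f v then 0 else w a v)
        = (if f v = f a then 0 else w v a) := by
      intro a; rw [hsymm]; exact if_congr eq_comm rfl rfl
    have hsplit1 : N f =
        (∑ a ∈ Finset.univ.erase v, ∑ b : V, if f a = f b then 0 else w a b)
        + ∑ b : V, (if f v = f b then 0 else w v b) :=
      (Finset.sum_erase_add _ _ (Finset.mem_univ v)).symm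
    have hrow : ∀ a : V,
        (∑ b : V, if f a = f b then 0 else w a b)
        = (∑ b ∈ Finset.univ.erase v, if f a = f b then 0 else w a b)
          + (if f a = f v then 0 else w a v) :=
      fun a => (Finset.sum_erase_add _ _ (Finset.mem_univ v)).symm
    have hcol : (∑ a ∈ Finset.univ.erase v, if f a = f v then 0 else w a v)
        = ∑ b : V, if f v = f b then 0 else w v b := by
      rw [Finset.sum_congr rfl (fun a _ => tsymm a)]
      exact Finset.sum_erase _ (by simp)
    rw [hsplit1, Finset.sum_congr rfl (fun a _ => hrow a),
      Finset.sum_add_distrib, hcol]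
    ring
  -- the value of the v-row sum
  have Dform : ∀ f : V → Fin p,
      (∑ b : V, if f v = f b then 0 else w v b)
      = (if f v = f u then 0 else w v u) + (if f v = f u' then 0 else w v u') := by
    intro f
    rw [← Finset.sum_subset (Finset.subset_univ ({u, u'} : Finset V))]
    · rw [Finset.sum_pair huu']
    · intro x _ hx
      simp only [Finset.mem_insert, Finset.mem_singleton, not_or] at hx
      rw [hzero x hx.1 hx.2]
      simp
  -- a multiterminal cut exists
  have hex : ∃ f : V → Fin p, IsMTC t f := by
    refine ⟨fun x => if h : ∃ i, t i = x then h.choose else ⟨0, by omega⟩, ?_⟩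
    intro i
    have h : ∃ j, t j = t i := ⟨i, rfl⟩
    simp only [dif_pos h]
    exact ht h.choose_spec
  -- take a minimum multiterminal cut g
  obtain ⟨g, hgmem, hgmin⟩ := Finset.exists_min_image
    (Finset.univ.filter fun f : V → Fin p => IsMTC t f) (mtcSize w)
    ⟨hex.choose, by simp [hex.choose_spec]⟩
  have hg : IsMTC t g := by simpa using hgmem
  have hgmin' : ∀ g' : V → Fin p, IsMTC t g' → mtcSize w g ≤ mtcSize w g' := by
    intro g' hg'
    exact hgmin g' (by simp [hg'])
  by_cases hcase : g v = g u
  · exact ⟨g, ⟨hg, hgmin'⟩, hcase⟩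
  · -- move v to u's part
    set f : V → Fin p := Function.update g v (g u) with hf
    have hfne : ∀ x, x ≠ v → f x = g x := fun x hx => Function.update_of_ne hx _ _
    have hfv : f v = g u := Function.update_self _ _ _
    have hfu : f u = g u := hfne u huv
    have hfu' : f u' = g u' := hfne u' hu'v
    have hmtc : IsMTC t f := by
      intro i
      have : t i ≠ v := fun h => hv ⟨i, h⟩
      rw [hfne _ this]; exact hg i
    have hA : (∑ a ∈ Finset.univ.erase v, ∑ b ∈ Finset.univ.erase v,
        if f a = f b then 0 else w a b)
        = ∑ a ∈ Finset.univ.erase v, ∑ b ∈ Finset.univ.erase v,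
        if g a = g b then 0 else w a b := by
      refine Finset.sum_congr rfl fun a ha => Finset.sum_congr rfl fun b hb => ?_
      rw [hfne a (Finset.ne_of_mem_erase ha), hfne b (Finset.ne_of_mem_erase hb)]
    have hD : (∑ b : V, if f v = f b then 0 else w v b)
        ≤ ∑ b : V, if g v = g b then 0 else w v b := by
      rw [Dform f, Dform g, hfv, hfu, hfu', if_pos rfl, if_neg hcase]
      calc 0 + (if g u = g u' then 0 else w v u') ≤ w v u' := by split <;> omega
        _ ≤ w v u := hwt
        _ ≤ w v u + (if g v = g u' then 0 else w v u') := Nat.le_add_right _ _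
    have hNle : N f ≤ N g := by
      rw [key f, key g, hA]
      omega
    have hle : mtcSize w f ≤ mtcSize w g := by
      rw [hsize f, hsize g]
      have : (N f : ℚ) ≤ (N g : ℚ) := Nat.cast_le.mpr hNle
      linarith
    refine ⟨f, ⟨hmtc, fun g' hg' => le_trans hle (hgmin' g' hg')⟩, ?_⟩
    rw [hfv, hfu]
end

section
/- Given isolating cuts C_1,…,C_p for terminals t_1,…,t_p (pairwise disjoint), omitting the one of largest size and placing all remaining vertices into that part yields a multiterminal cut of size at most (1 − 1/p)·Σ_{i=1}^p d(C_i). -/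
open Finset

variable {V : Type*} [Fintype V] [DecidableEq V]

/-- Given pairwise disjoint isolating cuts C_1, …, C_p, omitting a largest one
and putting all remaining vertices in its part gives a multiterminal cut of
size at most (1 - 1/p) · Σ d(C_i). -/
theorem omit_largest_isoCut {p : ℕ} (hp : 2 ≤ p)
    (w : V → V → ℕ) (hsymm : ∀ u v, w u v = w v u)
    (t : Fin p → V) (ht : Function.Injective t)
    (C : Fin p → Finset V)
    (hmem : ∀ i, t i ∈ C i)
    (hiso : ∀ i, C i ∩ Finset.univ.image t = {t i})
    (hdisj : ∀ i j, i ≠ j → Disjoint (C i) (C j))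
    (j : Fin p) (hj : ∀ i, cutSize w (C i) ≤ cutSize w (C j)) :
    ∃ f : V → Fin p, IsMTC t f ∧
      (∀ i, i ≠ j → ∀ x ∈ C i, f x = i) ∧
      (∀ x : V, (∀ i, i ≠ j → x ∉ C i) → f x = j) ∧
      mtcSize w f ≤ (1 - 1 / (p : ℚ)) * ∑ i : Fin p, (cutSize w (C i) : ℚ) := by
  classical
  set f : V → Fin p := fun x => if h : ∃ i, i ≠ j ∧ x ∈ C i then h.choose else j with hf
  have hf1 : ∀ i, i ≠ j → ∀ x ∈ C i, f x = i := by
    intro i hi x hx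
    have h : ∃ i', i' ≠ j ∧ x ∈ C i' := ⟨i, hi, hx⟩
    have hch := h.choose_spec
    have he : f x = h.choose := by simp only [hf, dif_pos h]
    rw [he]
    by_contra hne
    exact (Finset.disjoint_left.mp (hdisj _ _ hne) hch.2) hx
  have hf2 : ∀ x : V, (∀ i, i ≠ j → x ∉ C i) → f x = j := by
    intro x hx
    have h : ¬ ∃ i', i' ≠ j ∧ x ∈ C i' := by
      rintro ⟨i, hi, hxi⟩; exact hx i hi hxi
    simp only [hf, dif_neg h]
  have hf3 : ∀ x : V, f x ≠ j → x ∈ C (f x) := by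
    intro x hx
    by_cases h : ∃ i', i' ≠ j ∧ x ∈ C i'
    · have he : f x = h.choose := by simp only [hf, dif_pos h]
      rw [he]; exact h.choose_spec.2
    · exact absurd (by simp only [hf, dif_neg h]) hx
  have hmtc : IsMTC t f := by
    intro i
    by_cases hij : i = j
    · rw [hij]
      apply hf2
      intro k hk hmem'
      exact (Finset.disjoint_left.mp (hdisj k j hk) hmem') (hmem j)
    · exact hf1 i hij (t i) (hmem i)
  refine ⟨f, hmtc, hf1, hf2, ?_⟩
  -- the key counting bound, in ℕ
  have key : (∑ u : V, ∑ v : V, if f u = f v then 0 else w u v) ≤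
      ∑ i ∈ Finset.univ.erase j, 2 * cutSize w (C i) := by
    have step : ∀ u v : V, (if f u = f v then 0 else w u v) ≤
        ∑ i ∈ Finset.univ.erase j,
          ((if u ∈ C i ∧ v ∉ C i then w u v else 0) +
           (if v ∈ C i ∧ u ∉ C i then w u v else 0)) := by
      intro u v
      by_cases hfe : f u = f v
      · simp [hfe]
      · rw [if_neg hfe]
        by_cases hu : f u = j
        · have hv : f v ≠ j := fun h => hfe (hu.trans h.symm)
          have hvC : v ∈ C (f v) := hf3 v hv
          have huC : u ∉ C (f v) := fun h => hfe (hf1 (f v) hv u h)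
          calc w u v ≤ (if u ∈ C (f v) ∧ v ∉ C (f v) then w u v else 0) +
                (if v ∈ C (f v) ∧ u ∉ C (f v) then w u v else 0) := by
                have h2 : (if v ∈ C (f v) ∧ u ∉ C (f v) then w u v else 0) = w u v :=
                  if_pos ⟨hvC, huC⟩
                rw [h2]; exact Nat.le_add_left _ _
            _ ≤ _ := Finset.single_le_sum
                (f := fun i => (if u ∈ C i ∧ v ∉ C i then w u v else 0) +
                  (if v ∈ C i ∧ u ∉ C i then w u v else 0))
                (fun i _ => Nat.zero_le _)
                (Finset.mem_erase.mpr ⟨hv, Finset.mem_univ _⟩)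
        · have huC : u ∈ C (f u) := hf3 u hu
          have hvC : v ∉ C (f u) := fun h => hfe ((hf1 (f u) hu v h).symm)
          calc w u v ≤ (if u ∈ C (f u) ∧ v ∉ C (f u) then w u v else 0) +
                (if v ∈ C (f u) ∧ u ∉ C (f u) then w u v else 0) := by
                have h2 : (if u ∈ C (f u) ∧ v ∉ C (f u) then w u v else 0) = w u v :=
                  if_pos ⟨huC, hvC⟩
                rw [h2]; exact Nat.le_add_right _ _
            _ ≤ _ := Finset.single_le_sum
                (f := fun i => (if u ∈ C i ∧ v ∉ C i then w u v else 0) +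
                  (if v ∈ C i ∧ u ∉ C i then w u v else 0))
                (fun i _ => Nat.zero_le _)
                (Finset.mem_erase.mpr ⟨hu, Finset.mem_univ _⟩)
    have cut1 : ∀ S : Finset V,
        (∑ u : V, ∑ v : V, if u ∈ S ∧ v ∉ S then w u v else 0) = cutSize w S := by
      intro S
      have inner : ∀ u : V, (∑ v : V, if u ∈ S ∧ v ∉ S then w u v else 0)
          = if u ∈ S then ∑ v ∈ Sᶜ, w u v else 0 := by
        intro u
        by_cases hu : u ∈ S
        · simp only [hu, true_and, if_true]
          rw [← Finset.sum_filter]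
          congr 1
          ext v; simp
        · simp [hu]
      simp only [inner]
      unfold cutSize
      rw [← Finset.sum_filter]
      congr 1
      ext u; simp
    have cut2 : ∀ S : Finset V,
        (∑ u : V, ∑ v : V, if v ∈ S ∧ u ∉ S then w u v else 0) = cutSize w S := by
      intro S
      rw [Finset.sum_comm, ← cut1 S]
      exact Finset.sum_congr rfl fun a _ => Finset.sum_congr rfl fun b _ => by
        rw [hsymm b a]
    calc (∑ u : V, ∑ v : V, if f u = f v then 0 else w u v)
        ≤ ∑ u : V, ∑ v : V, ∑ i ∈ Finset.univ.erase j,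
            ((if u ∈ C i ∧ v ∉ C i then w u v else 0) +
             (if v ∈ C i ∧ u ∉ C i then w u v else 0)) := by
          exact Finset.sum_le_sum fun u _ => Finset.sum_le_sum fun v _ => step u v
      _ = ∑ i ∈ Finset.univ.erase j, ∑ u : V, ∑ v : V,
            ((if u ∈ C i ∧ v ∉ C i then w u v else 0) +
             (if v ∈ C i ∧ u ∉ C i then w u v else 0)) := by
          rw [show (∑ u : V, ∑ v : V, ∑ i ∈ Finset.univ.erase j,
              ((if u ∈ C i ∧ v ∉ C i then w u v else 0) +
               (if v ∈ C i ∧ u ∉ C i then w u v else 0)))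
            = ∑ u : V, ∑ i ∈ Finset.univ.erase j, ∑ v : V,
              ((if u ∈ C i ∧ v ∉ C i then w u v else 0) +
               (if v ∈ C i ∧ u ∉ C i then w u v else 0)) from
            Finset.sum_congr rfl fun u _ => Finset.sum_comm, Finset.sum_comm]
      _ = ∑ i ∈ Finset.univ.erase j, 2 * cutSize w (C i) := by
          refine Finset.sum_congr rfl fun i _ => ?_
          simp only [Finset.sum_add_distrib]
          rw [cut1, cut2]
          omega
  -- pass to ℚ
  set N : ℕ := ∑ u : V, ∑ v : V, if f u = f v then 0 else w u v with hN
  have hNQ : mtcSize w f = (N : ℚ) / 2 := by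
    unfold mtcSize
    congr 1
    rw [hN]
    push_cast
    rfl
  have hp0 : (0 : ℚ) < p := by
    have : 0 < p := by omega
    exact_mod_cast this
  have hpj : (∑ i : Fin p, (cutSize w (C i) : ℚ)) ≤ p * cutSize w (C j) := by
    calc (∑ i : Fin p, (cutSize w (C i) : ℚ))
        ≤ ∑ _i : Fin p, (cutSize w (C j) : ℚ) :=
          Finset.sum_le_sum fun i _ => by exact_mod_cast hj i
      _ = p * cutSize w (C j) := by
          rw [Finset.sum_const, Finset.card_univ, Fintype.card_fin, nsmul_eq_mul]
  have hsum_erase : (∑ i ∈ Finset.univ.erase j, (cutSize w (C i) : ℚ))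
      = (∑ i : Fin p, (cutSize w (C i) : ℚ)) - cutSize w (C j) := by
    rw [← Finset.sum_erase_add _ _ (Finset.mem_univ j)]
    ring
  have hkeyQ : (N : ℚ) ≤ 2 * ((∑ i : Fin p, (cutSize w (C i) : ℚ)) - cutSize w (C j)) := by
    calc (N : ℚ) ≤ ((∑ i ∈ Finset.univ.erase j, 2 * cutSize w (C i) : ℕ) : ℚ) := by
          exact_mod_cast key
      _ = 2 * ∑ i ∈ Finset.univ.erase j, (cutSize w (C i) : ℚ) := by
          push_cast
          rw [Finset.mul_sum]
      _ = _ := by rw [hsum_erase]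
  have h2 : (∑ i : Fin p, (cutSize w (C i) : ℚ)) / p ≤ cutSize w (C j) := by
    rw [div_le_iff₀ hp0]
    linarith [hpj]
  rw [hNQ, div_le_iff₀ (by norm_num : (0:ℚ) < 2)]
  have hring : (1 - 1 / (p : ℚ)) * (∑ i : Fin p, (cutSize w (C i) : ℚ)) * 2
      = 2 * ((∑ i : Fin p, (cutSize w (C i) : ℚ))
        - (∑ i : Fin p, (cutSize w (C i) : ℚ)) / p) := by
    ring
  rw [hring]
  linarith [hkeyQ, h2]
end

section
/- Suppose for every terminal t the singleton {t} is the max-vol minimum isolating cut, and v is a non-terminal vertex with ext_p(v) = 1 (so X_p(v) = {v}). Then for every non-terminal vertex u ≠ v, d({t_p, v, u}) ≥ d({t_p}) + 2. -/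
open Finset

variable {V : Type*} [Fintype V] [DecidableEq V]

/-- If each singleton terminal is its own max-vol minimum isolating cut and v
is a non-terminal with ext_p(v) = 1 (so the max-vol minimum ({t_p,v})-isolating
cut is {t_p, v}), then d({t_p, v, u}) ≥ d({t_p}) + 2 for every other
non-terminal vertex u. -/
theorem cutSize_three_ge (w : V → V → ℕ) (hsymm : ∀ u v, w u v = w v u)
    (T : Finset V) (tp : V) (htp : tp ∈ T)
    (hsing : ∀ s ∈ T, ∀ X : Finset V, s ∈ X → Disjoint X (T.erase s) →
      cutSize w X = isoMu w T s → X = {s})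
    (v : V) (hv : v ∉ T)
    (hmaxvol : IsMaxVolMinCut w {tp, v} (T.erase tp) {tp, v})
    (hext : cutSize w {tp, v} = cutSize w ({tp} : Finset V) + 1)
    (u : V) (hu : u ∉ T) (huv : u ≠ v) :
    cutSize w ({tp} : Finset V) + 2 ≤ cutSize w {tp, v, u} := by
  have hutp : u ≠ tp := fun h => hu (h ▸ htp)
  have hcut : IsSTCut {tp, v} (T.erase tp) {tp, v, u} := by
    constructor
    · intro x hx
      simp only [mem_insert, mem_singleton] at hx ⊢
      tauto
    · rw [Finset.disjoint_left]
      intro x hx hxT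
      simp only [mem_insert, mem_singleton] at hx
      rcases hx with rfl | rfl | rfl
      · exact (Finset.notMem_erase x T) hxT
      · exact hv (Finset.mem_of_mem_erase hxT)
      · exact hu (Finset.mem_of_mem_erase hxT)
  have h1 : cutSize w {tp, v} ≤ cutSize w {tp, v, u} := hmaxvol.1.2 _ hcut
  rcases lt_or_eq_of_le h1 with h2 | h2
  · omega
  · exfalso
    have hmin : IsMinSTCut w {tp, v} (T.erase tp) {tp, v, u} :=
      ⟨hcut, fun Y hY => h2 ▸ hmaxvol.1.2 Y hY⟩
    have hsub := hmaxvol.2 _ hmin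
    have : u ∈ ({tp, v} : Finset V) := hsub (by simp)
    simp only [mem_insert, mem_singleton] at this
    tauto
end
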